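/- Let A be a finite abelian group with subgroups H, K ⊆ A, and suppose K = ℜ_{φ₀}(H) for some duality φ₀ of A. Then H is a characteristic subgroup of A if and only if K is a characteristic subgroup of A. -/

import Mathlib

/-- A duality of a finite abelian group `A`: a group isomorphism from `A` to its
character group `Â = AddChar A ℂˣ`, encoded as a bijective map respecting the operations. -/
def IsDuality {A : Type*} [AddCommGroup A] (φ : A → AddChar A ℂˣ) : Prop :=
  Function.Bijective φ ∧ ∀ a b : A, φ (a + b) = φ a * φ b

/-- The left dual of a set `S ⊆ A`: all `x` with `Φ(x,h) = φ(x)(h) = 1` for all `h ∈ S`. -/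
def lDual {A : Type*} [AddCommGroup A] (φ : A → AddChar A ℂˣ) (S : Set A) : Set A :=
  {x | ∀ h ∈ S, φ x h = 1}

/-- The right dual of a set `S ⊆ A`: all `x` with `Φ(h,x) = φ(h)(x) = 1` for all `h ∈ S`. -/
def rDual {A : Type*} [AddCommGroup A] (φ : A → AddChar A ℂˣ) (S : Set A) : Set A :=
  {x | ∀ h ∈ S, φ h x = 1}

/-!
An automorphism `τ` of `A` has an "inverse adjoint" `σ` for the pairing, `Φ(σ a, τ x) = Φ(a, x)`,
obtained by transporting precomposition with `τ⁻¹` on `Â` back along `φ`. Hence `τ` maps the right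
dual of `S` onto the right dual of `σ(S)`, so the right dual of a characteristic set is
characteristic. For the converse, `H` is the right dual of `K` for the transposed pairing
`(a, b) ↦ Φ(b, a)`. The transpose is injective because characters separate points, hence a duality
by counting, and `H` exhausts its double dual because characters of `A/H` separate points.
-/

open Function

namespace AddChar

variable {A : Type*} [AddCommGroup A]

noncomputable def toUnits (ψ : AddChar A ℂ) : AddChar A ℂˣ where
  toFun a := (ψ.val_isUnit a).unit
  map_zero_eq_one' := by ext; simp
  map_add_eq_mul' a b := by ext; simp [map_add_eq_mul]

@[simp]
lemma coe_toUnits_apply (ψ : AddChar A ℂ) (a : A) : (ψ.toUnits a : ℂ) = ψ a := rfl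

lemma exists_units_apply_ne_one_of_notMem [Finite A] {H : AddSubgroup A} {a : A}
    (ha : a ∉ H) : ∃ χ : AddChar A ℂˣ, (∀ h ∈ H, χ h = 1) ∧ χ a ≠ 1 := by
  have : (a : A ⧸ H) ≠ 0 := by rwa [Ne, QuotientAddGroup.eq_zero_iff]
  obtain ⟨ψ, hψ⟩ := exists_apply_ne_zero.2 this
  refine ⟨ψ.toUnits.compAddMonoidHom (QuotientAddGroup.mk' H), fun h hh => ?_, fun h1 => hψ ?_⟩
  · ext
    simp [(QuotientAddGroup.eq_zero_iff h).2 hh]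
  · simpa using congrArg Units.val h1

end AddChar

lemma image_rDual {A : Type*} [AddCommGroup A] {φ : A → AddChar A ℂˣ} {σ τ : AddAut A}
    (hστ : ∀ a x, φ (σ a) (τ x) = φ a x) (S : Set A) :
    τ '' rDual φ S = rDual φ (σ '' S) := by
  ext x
  obtain ⟨y, rfl⟩ := τ.surjective x
  simp [rDual, hστ, τ.injective.mem_set_image]

namespace IsDuality

variable {A : Type*} [AddCommGroup A] {φ : A → AddChar A ℂˣ}

lemma map_zero (hφ : IsDuality φ) : φ 0 = 1 := by
  ext a : 1
  simpa using DFunLike.congr_fun (hφ.2 0 0) a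

noncomputable def transpose (hφ : IsDuality φ) (a : A) : AddChar A ℂˣ where
  toFun b := φ b a
  map_zero_eq_one' := by simp [hφ.map_zero]
  map_add_eq_mul' b c := by simp [hφ.2 b c]

@[simp]
lemma transpose_apply (hφ : IsDuality φ) (a b : A) : hφ.transpose a b = φ b a := rfl

lemma rDual_transpose (hφ : IsDuality φ) (S : Set A) : rDual hφ.transpose S = lDual φ S := rfl

lemma transpose_isDuality [Finite A] (hφ : IsDuality φ) : IsDuality hφ.transpose := by
  have hinj : Injective hφ.transpose := by
    intro a b hab
    by_contra hne
    obtain ⟨χ, -, hχ⟩ := AddChar.exists_units_apply_ne_one_of_notMem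
      (H := ⊥) (a := a - b) (by simpa [sub_eq_zero] using hne)
    obtain ⟨x, rfl⟩ := hφ.1.2 χ
    have : φ x a = φ x b := by simpa using DFunLike.congr_fun hab x
    simp [sub_eq_add_neg, AddChar.map_add_eq_mul, AddChar.map_neg_eq_inv, this] at hχ
  have : Finite (AddChar A ℂˣ) := Finite.of_surjective φ hφ.1.2
  refine ⟨(Nat.bijective_iff_injective_and_card _).2 ⟨hinj, Nat.card_eq_of_bijective φ hφ.1⟩,
    fun a b => ?_⟩
  ext x
  simp [AddChar.map_add_eq_mul]

lemma lDual_rDual [Finite A] (hφ : IsDuality φ) (H : AddSubgroup A) :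
    lDual φ (rDual φ H) = H := by
  refine Set.Subset.antisymm (fun a ha => ?_) fun h hh x hx => hx h hh
  by_contra haH
  obtain ⟨χ, hχH, hχa⟩ := AddChar.exists_units_apply_ne_one_of_notMem haH
  obtain ⟨x, rfl⟩ := hφ.transpose_isDuality.1.2 χ
  exact hχa (ha x hχH)

lemma exists_addAut_apply_apply (hφ : IsDuality φ) (τ : AddAut A) :
    ∃ σ : AddAut A, ∀ a x, φ (σ a) (τ x) = φ a x := by
  let pre : AddChar A ℂˣ ≃ AddChar A ℂˣ :=
    { toFun χ := χ.compAddMonoidHom τ.symm.toAddMonoidHom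
      invFun χ := χ.compAddMonoidHom τ.toAddMonoidHom
      left_inv χ := by ext; simp
      right_inv χ := by ext; simp }
  let e := Equiv.ofBijective φ hφ.1
  let σ : A ≃ A := e.trans (pre.trans e.symm)
  have hσ (a : A) : φ (σ a) = pre (φ a) := e.apply_symm_apply _
  refine ⟨AddEquiv.mk' σ fun a b => hφ.1.1 ?_, fun a x => ?_⟩
  · ext x
    simp [hσ, hφ.2, pre]
  · show φ (σ a) (τ x) = _
    simp [hσ, pre]

lemma image_rDual_of_forall_image_eq (hφ : IsDuality φ) {S : Set A}
    (hS : ∀ τ : AddAut A, (τ : A → A) '' S = S) (τ : AddAut A) :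
    τ '' rDual φ S = rDual φ S := by
  obtain ⟨σ, hστ⟩ := hφ.exists_addAut_apply_apply τ
  rw [image_rDual hστ, hS σ]

end IsDuality

/-- If `K` is a right dual of `H` for some duality, then `H` is characteristic iff `K` is
characteristic. -/
theorem dual_characteristic_iff {A : Type*} [AddCommGroup A] [Fintype A]
    (H K : AddSubgroup A) (φ₀ : A → AddChar A ℂˣ) (hφ₀ : IsDuality φ₀)
    (hK : (K : Set A) = rDual φ₀ (H : Set A)) :
    (∀ τ : AddAut A, (τ : A → A) '' (H : Set A) = (H : Set A)) ↔
      (∀ τ : AddAut A, (τ : A → A) '' (K : Set A) = (K : Set A)) := by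
  have hH : (H : Set A) = rDual hφ₀.transpose K := by
    rw [hK, hφ₀.rDual_transpose, hφ₀.lDual_rDual]
  refine ⟨fun hHchar τ => ?_, fun hKchar τ => ?_⟩
  · rw [hK]
    exact hφ₀.image_rDual_of_forall_image_eq hHchar τ
  · rw [hH]
    exact hφ₀.transpose_isDuality.image_rDual_of_forall_image_eq hKchar τ
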